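/- arXiv:2207.05716 — 6 statements merged into one kernel-verified Lean document; each statement's English description precedes it below -/
import Mathlib

section
/- Let (T, q) be a classical solution of the Guyer–Krumhansl system on (0,l) with boundary conditions q(0,t) = q(l,t) = 0. Then for every t ≥ 0 the functional energy E is differentiable at t and E'(t) = −(1/k)∫_0^l q(x,t)² dx − (μ²/k)∫_0^l (∂_x q(x,t))² dx; in particular E'(t) ≤ 0. -/
/-!
The energy density `e = (ρc/2) T² + (τ_q/(2k)) q²` satisfies, by the two equations,
`e_t = -(q² + μ² q_x²)/k + ∂ₓ(μ²/k · q q_x - T q)`. The flux in the last term vanishes at both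
ends because `q` does, so integrating over `[0, l]` gives the formula for `E'`. Differentiation
under the integral sign is justified by the joint continuity of the fields; at `t = 0` the
one-sided derivative is recovered from the interior one by continuity, and the equations, which
are only assumed in the open region, extend to its closure for the same reason.
-/

open Set MeasureTheory intervalIntegral

/-- A classical solution of the one-dimensional Guyer–Krumhansl system on `(0, l)`:
`T` is the temperature, `q` the heat flux, and `Tt, Tx, qt, qx, qxx` are the
corresponding partial derivatives (continuous on `[0,l] × [0,∞)`), satisfying
`ρ c T_t + q_x = 0` and `τ_q q_t + q − μ² q_xx + k T_x = 0` on `(0,l) × (0,∞)`,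
with adiabatic boundary conditions `q(0,t) = q(l,t) = 0` for all `t ≥ 0`. -/
structure IsGKSolution (l ρ c τq μ2 k : ℝ)
    (T q Tt Tx qt qx qxx : ℝ → ℝ → ℝ) : Prop where
  contT : ContinuousOn (fun p : ℝ × ℝ => T p.1 p.2) (Icc (0:ℝ) l ×ˢ Ici (0:ℝ))
  contq : ContinuousOn (fun p : ℝ × ℝ => q p.1 p.2) (Icc (0:ℝ) l ×ˢ Ici (0:ℝ))
  hTt : ∀ x ∈ Icc (0:ℝ) l, ∀ t ∈ Ici (0:ℝ),
    HasDerivWithinAt (fun s => T x s) (Tt x t) (Ici (0:ℝ)) t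
  hTx : ∀ x ∈ Icc (0:ℝ) l, ∀ t ∈ Ici (0:ℝ),
    HasDerivWithinAt (fun y => T y t) (Tx x t) (Icc (0:ℝ) l) x
  hqt : ∀ x ∈ Icc (0:ℝ) l, ∀ t ∈ Ici (0:ℝ),
    HasDerivWithinAt (fun s => q x s) (qt x t) (Ici (0:ℝ)) t
  hqx : ∀ x ∈ Icc (0:ℝ) l, ∀ t ∈ Ici (0:ℝ),
    HasDerivWithinAt (fun y => q y t) (qx x t) (Icc (0:ℝ) l) x
  hqxx : ∀ x ∈ Icc (0:ℝ) l, ∀ t ∈ Ici (0:ℝ),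
    HasDerivWithinAt (fun y => qx y t) (qxx x t) (Icc (0:ℝ) l) x
  contTt : ContinuousOn (fun p : ℝ × ℝ => Tt p.1 p.2) (Icc (0:ℝ) l ×ˢ Ici (0:ℝ))
  contTx : ContinuousOn (fun p : ℝ × ℝ => Tx p.1 p.2) (Icc (0:ℝ) l ×ˢ Ici (0:ℝ))
  contqt : ContinuousOn (fun p : ℝ × ℝ => qt p.1 p.2) (Icc (0:ℝ) l ×ˢ Ici (0:ℝ))
  contqx : ContinuousOn (fun p : ℝ × ℝ => qx p.1 p.2) (Icc (0:ℝ) l ×ˢ Ici (0:ℝ))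
  contqxx : ContinuousOn (fun p : ℝ × ℝ => qxx p.1 p.2) (Icc (0:ℝ) l ×ˢ Ici (0:ℝ))
  pde1 : ∀ x ∈ Ioo (0:ℝ) l, ∀ t ∈ Ioi (0:ℝ), ρ * c * Tt x t + qx x t = 0
  pde2 : ∀ x ∈ Ioo (0:ℝ) l, ∀ t ∈ Ioi (0:ℝ),
    τq * qt x t + q x t - μ2 * qxx x t + k * Tx x t = 0
  bc0 : ∀ t : ℝ, 0 ≤ t → q 0 t = 0
  bcl : ∀ t : ℝ, 0 ≤ t → q l t = 0

/-- The functional energy `E(t) = (ρc/2)∫₀ˡ T² dx + (τ_q/(2k))∫₀ˡ q² dx`. -/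
noncomputable def gkEnergy (l ρ c τq k : ℝ) (T q : ℝ → ℝ → ℝ) (t : ℝ) : ℝ :=
  ρ * c / 2 * (∫ x in (0:ℝ)..l, (T x t) ^ 2)
    + τq / (2 * k) * (∫ x in (0:ℝ)..l, (q x t) ^ 2)

open Filter Topology Function
open scoped Interval

section ParametricIntervalIntegral

variable {E : Type*} [NormedAddCommGroup E] [NormedSpace ℝ E]
  {a b : ℝ} {F F' : ℝ → ℝ → E}

theorem continuousOn_intervalIntegral_of_continuousOn_uncurry {s : Set ℝ} (hs : IsClosed s)
    (hF : ContinuousOn (uncurry F) ([[a, b]] ×ˢ s)) :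
    ContinuousOn (fun t => ∫ x in a..b, F x t) s := by
  intro t₀ ht₀
  have hK : IsCompact ([[a, b]] ×ˢ (s ∩ Metric.closedBall t₀ 1)) :=
    isCompact_uIcc.prod ((isCompact_closedBall t₀ 1).inter_left hs)
  obtain ⟨M, hM⟩ := hK.exists_bound_of_continuousOn (hF.mono (prod_mono_right inter_subset_left))
  have hnear : ∀ᶠ t in 𝓝[s] t₀, t ∈ s ∩ Metric.closedBall t₀ 1 :=
    inter_mem_nhdsWithin s (Metric.closedBall_mem_nhds t₀ one_pos)
  refine continuousWithinAt_of_dominated_interval (bound := fun _ => M) ?_ ?_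
    intervalIntegrable_const ?_
  · filter_upwards [self_mem_nhdsWithin] with t ht
    exact ((hF.uncurry_right t ht).mono uIoc_subset_uIcc).aestronglyMeasurable measurableSet_uIoc
  · filter_upwards [hnear] with t ht
    exact ae_of_all _ fun x hx => hM (x, t) ⟨uIoc_subset_uIcc hx, ht⟩
  · exact ae_of_all _ fun x hx => hF.uncurry_left x (uIoc_subset_uIcc hx) t₀ ht₀

theorem hasDerivAt_intervalIntegral_of_continuousOn_uncurry {U : Set ℝ} (hU : IsOpen U)
    (hF : ContinuousOn (uncurry F) ([[a, b]] ×ˢ U))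
    (hF' : ContinuousOn (uncurry F') ([[a, b]] ×ˢ U))
    (hd : ∀ x ∈ [[a, b]], ∀ t ∈ U, HasDerivAt (F x) (F' x t) t) {t₀ : ℝ} (ht₀ : t₀ ∈ U) :
    HasDerivAt (fun t => ∫ x in a..b, F x t) (∫ x in a..b, F' x t₀) t₀ := by
  obtain ⟨ε, hε, hball⟩ := Metric.nhds_basis_closedBall.mem_iff.1 (hU.mem_nhds ht₀)
  obtain ⟨M, hM⟩ := (isCompact_uIcc.prod (isCompact_closedBall t₀ ε)).exists_bound_of_continuousOn
    (hF'.mono (prod_mono_right hball))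
  have hmeas : ∀ {G : ℝ → ℝ → E}, ContinuousOn (uncurry G) ([[a, b]] ×ˢ U) → ∀ t ∈ U,
      AEStronglyMeasurable (fun x => G x t) (volume.restrict (Ι a b)) := fun hG t ht =>
    ((hG.uncurry_right t ht).mono uIoc_subset_uIcc).aestronglyMeasurable measurableSet_uIoc
  refine (intervalIntegral.hasDerivAt_integral_of_dominated_loc_of_deriv_le
    (F := fun t x => F x t) (F' := fun t x => F' x t) (bound := fun _ => M)
    (Metric.ball_mem_nhds t₀ hε) ?_ ?_ (hmeas hF' t₀ ht₀) ?_ intervalIntegrable_const ?_).2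
  · filter_upwards [hU.mem_nhds ht₀] with t ht using hmeas hF t ht
  · exact (hF.uncurry_right t₀ ht₀).intervalIntegrable
  · exact ae_of_all _ fun x hx t ht =>
      hM (x, t) ⟨uIoc_subset_uIcc hx, Metric.ball_subset_closedBall ht⟩
  · exact ae_of_all _ fun x hx t ht =>
      hd x (uIoc_subset_uIcc hx) t (hball (Metric.ball_subset_closedBall ht))

theorem hasDerivWithinAt_intervalIntegral_Ici_of_continuousOn_uncurry {t₀ : ℝ}
    (hF : ContinuousOn (uncurry F) ([[a, b]] ×ˢ Ici t₀))
    (hF' : ContinuousOn (uncurry F') ([[a, b]] ×ˢ Ici t₀))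
    (hd : ∀ x ∈ [[a, b]], ∀ t ∈ Ici t₀, HasDerivWithinAt (F x) (F' x t) (Ici t₀) t)
    {t : ℝ} (ht : t ∈ Ici t₀) :
    HasDerivWithinAt (fun t => ∫ x in a..b, F x t) (∫ x in a..b, F' x t) (Ici t₀) t := by
  have hinterior : ∀ s ∈ Ioi t₀,
      HasDerivAt (fun t => ∫ x in a..b, F x t) (∫ x in a..b, F' x s) s := fun s hs =>
    hasDerivAt_intervalIntegral_of_continuousOn_uncurry isOpen_Ioi
      (hF.mono (prod_mono_right Ioi_subset_Ici_self))
      (hF'.mono (prod_mono_right Ioi_subset_Ici_self))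
      (fun x hx r hr => (hd x hx r (mem_Ioi.1 hr).le).hasDerivAt (Ici_mem_nhds hr)) hs
  rcases (mem_Ici.1 ht).eq_or_lt with rfl | hlt
  · refine hasDerivWithinAt_Ici_of_tendsto_deriv
      (fun s hs => (hinterior s hs).differentiableAt.differentiableWithinAt)
      ((continuousOn_intervalIntegral_of_continuousOn_uncurry isClosed_Ici hF t₀ ht).mono
        Ioi_subset_Ici_self) self_mem_nhdsWithin ?_
    refine Tendsto.congr' ?_
      ((continuousOn_intervalIntegral_of_continuousOn_uncurry isClosed_Ici hF' t₀ ht).mono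
        Ioi_subset_Ici_self)
    filter_upwards [self_mem_nhdsWithin] with s hs using ((hinterior s hs).deriv).symm
  · exact (hinterior t hlt).hasDerivWithinAt

end ParametricIntervalIntegral

theorem eqOn_Icc_prod_Ici_of_eqOn_Ioo_prod_Ioi {X : Type*} [TopologicalSpace X] [T2Space X]
    {a b t₀ : ℝ} (hab : a < b) {f g : ℝ × ℝ → X}
    (hf : ContinuousOn f (Icc a b ×ˢ Ici t₀)) (hg : ContinuousOn g (Icc a b ×ˢ Ici t₀))
    (h : EqOn f g (Ioo a b ×ˢ Ioi t₀)) : EqOn f g (Icc a b ×ˢ Ici t₀) :=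
  h.of_subset_closure hf hg (prod_mono Ioo_subset_Icc_self Ioi_subset_Ici_self)
    (by rw [closure_prod_eq, closure_Ioo hab.ne, closure_Ioi])

namespace IsGKSolution

variable {l ρ c τq μ2 k : ℝ} {T q Tt Tx qt qx qxx : ℝ → ℝ → ℝ}

theorem pde1_of_mem (h : IsGKSolution l ρ c τq μ2 k T q Tt Tx qt qx qxx) (hl : 0 < l)
    {x t : ℝ} (hx : x ∈ Icc 0 l) (ht : 0 ≤ t) : ρ * c * Tt x t + qx x t = 0 :=
  eqOn_Icc_prod_Ici_of_eqOn_Ioo_prod_Ioi (f := fun p => ρ * c * Tt p.1 p.2 + qx p.1 p.2) hl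
    ((continuousOn_const.mul h.contTt).add h.contqx) continuousOn_const
    (fun p hp => h.pde1 p.1 hp.1 p.2 hp.2) (mk_mem_prod hx ht)

theorem pde2_of_mem (h : IsGKSolution l ρ c τq μ2 k T q Tt Tx qt qx qxx) (hl : 0 < l)
    {x t : ℝ} (hx : x ∈ Icc 0 l) (ht : 0 ≤ t) :
    τq * qt x t + q x t - μ2 * qxx x t + k * Tx x t = 0 :=
  eqOn_Icc_prod_Ici_of_eqOn_Ioo_prod_Ioi
    (f := fun p => τq * qt p.1 p.2 + q p.1 p.2 - μ2 * qxx p.1 p.2 + k * Tx p.1 p.2) hl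
    ((((continuousOn_const.mul h.contqt).add h.contq).sub (continuousOn_const.mul h.contqxx)).add
      (continuousOn_const.mul h.contTx)) continuousOn_const
    (fun p hp => h.pde2 p.1 hp.1 p.2 hp.2) (mk_mem_prod hx ht)

theorem integral_deriv_flux_eq_zero (h : IsGKSolution l ρ c τq μ2 k T q Tt Tx qt qx qxx)
    (hl : 0 ≤ l) {t : ℝ} (ht : 0 ≤ t) :
    ∫ x in (0:ℝ)..l,
      (μ2 / k * (qx x t * qx x t + q x t * qxx x t) - (Tx x t * q x t + T x t * qx x t)) = 0 := by
  have hderiv : ∀ x ∈ Ioo 0 l, HasDerivAt (fun y => μ2 / k * (q y t * qx y t) - T y t * q y t)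
      (μ2 / k * (qx x t * qx x t + q x t * qxx x t) - (Tx x t * q x t + T x t * qx x t)) x := by
    intro x hx
    have hnhds : Icc 0 l ∈ 𝓝 x := Icc_mem_nhds hx.1 hx.2
    have hT := (h.hTx x (Ioo_subset_Icc_self hx) t ht).hasDerivAt hnhds
    have hq := (h.hqx x (Ioo_subset_Icc_self hx) t ht).hasDerivAt hnhds
    have hqx := (h.hqxx x (Ioo_subset_Icc_self hx) t ht).hasDerivAt hnhds
    exact ((hq.mul hqx).const_mul _).sub (hT.mul hq)
  have cT := h.contT.uncurry_right t ht
  have cq := h.contq.uncurry_right t ht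
  have cTx := h.contTx.uncurry_right t ht
  have cqx := h.contqx.uncurry_right t ht
  have cqxx := h.contqxx.uncurry_right t ht
  rw [integral_eq_sub_of_hasDerivAt_of_le hl
    ((continuousOn_const.mul (cq.mul cqx)).sub (cT.mul cq)) hderiv
    (((continuousOn_const.mul ((cqx.mul cqx).add (cq.mul cqxx))).sub
      ((cTx.mul cq).add (cT.mul cqx))).intervalIntegrable_of_Icc hl)]
  simp [h.bc0 t ht, h.bcl t ht]

theorem integral_energy_rate_eq (h : IsGKSolution l ρ c τq μ2 k T q Tt Tx qt qx qxx)
    (hl : 0 < l) (hk : k ≠ 0) {t : ℝ} (ht : 0 ≤ t) :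
    ∫ x in (0:ℝ)..l, (ρ * c * T x t * Tt x t + τq / k * q x t * qt x t)
      = -(1 / k) * (∫ x in (0:ℝ)..l, (q x t) ^ 2) - μ2 / k * (∫ x in (0:ℝ)..l, (qx x t) ^ 2) := by
  have hbalance : ∀ x ∈ uIcc 0 l, ρ * c * T x t * Tt x t + τq / k * q x t * qt x t
      = (μ2 / k * (qx x t * qx x t + q x t * qxx x t) - (Tx x t * q x t + T x t * qx x t))
        - (1 / k * q x t ^ 2 + μ2 / k * qx x t ^ 2) := by
    intro x hx
    rw [uIcc_of_le hl.le] at hx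
    linear_combination (norm := skip)
      T x t * h.pde1_of_mem hl hx ht + q x t / k * h.pde2_of_mem hl hx ht
    field_simp
    ring
  have cT := h.contT.uncurry_right t ht
  have cq := h.contq.uncurry_right t ht
  have cTx := h.contTx.uncurry_right t ht
  have cqx := h.contqx.uncurry_right t ht
  have cqxx := h.contqxx.uncurry_right t ht
  have iq2 := ((cq.fun_pow 2).intervalIntegrable_of_Icc (μ := volume) hl.le).const_mul (1 / k)
  have iqx2 := ((cqx.fun_pow 2).intervalIntegrable_of_Icc (μ := volume) hl.le).const_mul (μ2 / k)
  rw [integral_congr hbalance, integral_sub _ (iq2.add iqx2),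
    h.integral_deriv_flux_eq_zero hl.le ht, intervalIntegral.integral_add iq2 iqx2, intervalIntegral.integral_const_mul,
    intervalIntegral.integral_const_mul]
  · ring
  · exact ((continuousOn_const.mul ((cqx.mul cqx).add (cq.mul cqxx))).sub
      ((cTx.mul cq).add (cT.mul cqx))).intervalIntegrable_of_Icc hl.le

theorem gkEnergy_eq_integral (h : IsGKSolution l ρ c τq μ2 k T q Tt Tx qt qx qxx)
    (hl : 0 ≤ l) {t : ℝ} (ht : 0 ≤ t) :
    gkEnergy l ρ c τq k T q t
      = ∫ x in (0:ℝ)..l, (ρ * c / 2 * T x t ^ 2 + τq / (2 * k) * q x t ^ 2) := by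
  rw [intervalIntegral.integral_add, intervalIntegral.integral_const_mul,
    intervalIntegral.integral_const_mul, gkEnergy]
  · exact (((h.contT.uncurry_right t ht).fun_pow 2).intervalIntegrable_of_Icc hl).const_mul _
  · exact (((h.contq.uncurry_right t ht).fun_pow 2).intervalIntegrable_of_Icc hl).const_mul _

theorem hasDerivWithinAt_gkEnergy (h : IsGKSolution l ρ c τq μ2 k T q Tt Tx qt qx qxx)
    (hl : 0 < l) {t : ℝ} (ht : 0 ≤ t) :
    HasDerivWithinAt (gkEnergy l ρ c τq k T q)
      (∫ x in (0:ℝ)..l, (ρ * c * T x t * Tt x t + τq / k * q x t * qt x t)) (Ici 0) t := by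
  have hI : uIcc 0 l = Icc 0 l := uIcc_of_le hl.le
  refine (hasDerivWithinAt_intervalIntegral_Ici_of_continuousOn_uncurry
    (F := fun x s => ρ * c / 2 * T x s ^ 2 + τq / (2 * k) * q x s ^ 2)
    (F' := fun x s => ρ * c * T x s * Tt x s + τq / k * q x s * qt x s) ?_ ?_ ?_ ht).congr
    (fun s hs => h.gkEnergy_eq_integral hl.le hs) (h.gkEnergy_eq_integral hl.le ht)
  · rw [hI]
    exact (continuousOn_const.mul (h.contT.fun_pow 2)).add
      (continuousOn_const.mul (h.contq.fun_pow 2))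
  · rw [hI]
    exact ((continuousOn_const.mul h.contT).mul h.contTt).add
      ((continuousOn_const.mul h.contq).mul h.contqt)
  · rw [hI]
    intro x hx s hs
    exact ((((h.hTt x hx s hs).fun_pow 2).const_mul (ρ * c / 2)).fun_add
      (((h.hqt x hx s hs).fun_pow 2).const_mul (τq / (2 * k)))).congr_deriv (by norm_num; ring)

end IsGKSolution

theorem gk_energy_derivative_general
    (l ρ c τq μ2 k : ℝ) (hl : 0 < l)
    (hμ2 : 0 < μ2) (hk : 0 < k)
    (T q Tt Tx qt qx qxx : ℝ → ℝ → ℝ)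
    (hgk : IsGKSolution l ρ c τq μ2 k T q Tt Tx qt qx qxx) :
    ∀ t : ℝ, 0 ≤ t →
      HasDerivWithinAt (gkEnergy l ρ c τq k T q)
        (-(1 / k) * (∫ x in (0:ℝ)..l, (q x t) ^ 2)
          - μ2 / k * (∫ x in (0:ℝ)..l, (qx x t) ^ 2)) (Ici (0:ℝ)) t
      ∧ -(1 / k) * (∫ x in (0:ℝ)..l, (q x t) ^ 2)
          - μ2 / k * (∫ x in (0:ℝ)..l, (qx x t) ^ 2) ≤ 0 := by
  intro t ht
  have hE := hgk.hasDerivWithinAt_gkEnergy hl ht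
  rw [hgk.integral_energy_rate_eq hl hk.ne' ht] at hE
  refine ⟨hE, ?_⟩
  have hq2 : 0 ≤ ∫ x in (0:ℝ)..l, (q x t) ^ 2 := integral_nonneg hl.le fun x _ => sq_nonneg _
  have hqx2 : 0 ≤ ∫ x in (0:ℝ)..l, (qx x t) ^ 2 := integral_nonneg hl.le fun x _ => sq_nonneg _
  have hdissipation :
      0 ≤ 1 / k * (∫ x in (0:ℝ)..l, (q x t) ^ 2) + μ2 / k * ∫ x in (0:ℝ)..l, (qx x t) ^ 2 := by
    positivity
  linarith

/-- for a classical solution of the Guyer–Krumhansl system, for every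
`t ≥ 0` the functional energy `E` is differentiable at `t` with
`E'(t) = −(1/k)∫₀ˡ q² dx − (μ²/k)∫₀ˡ (∂ₓq)² dx ≤ 0`. -/
theorem gk_energy_derivative
    (l ρ c τq μ2 k : ℝ) (hl : 0 < l) (hρ : 0 < ρ) (hc : 0 < c)
    (hτq : 0 < τq) (hμ2 : 0 < μ2) (hk : 0 < k)
    (T q Tt Tx qt qx qxx : ℝ → ℝ → ℝ)
    (hgk : IsGKSolution l ρ c τq μ2 k T q Tt Tx qt qx qxx) :
    ∀ t : ℝ, 0 ≤ t →
      HasDerivWithinAt (gkEnergy l ρ c τq k T q)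
        (-(1 / k) * (∫ x in (0:ℝ)..l, (q x t) ^ 2)
          - μ2 / k * (∫ x in (0:ℝ)..l, (qx x t) ^ 2)) (Ici (0:ℝ)) t
      ∧ -(1 / k) * (∫ x in (0:ℝ)..l, (q x t) ^ 2)
          - μ2 / k * (∫ x in (0:ℝ)..l, (qx x t) ^ 2) ≤ 0 :=
  gk_energy_derivative_general l ρ c τq μ2 k hl hμ2 hk T q Tt Tx qt qx qxx hgk
end

section
/- Let (T, q) be a classical solution of the Guyer–Krumhansl system on (0,l) with boundary conditions q(0,t) = q(l,t) = 0. Then the functional energy E is non-increasing: for all 0 ≤ s ≤ t one has E(t) ≤ E(s). -/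
open Set MeasureTheory intervalIntegral

/-! Multiplying the first equation by `T` and the second by `q / k`, the energy rate
`∫₀ˡ (ρc T T_t + (τ_q/k) q q_t) dx` becomes the integral of the derivative of the flux
`(μ²/k) q q_x − T q`, which vanishes at both ends because `q` does, minus
`∫₀ˡ (μ² q_x² + q²)/k dx ≥ 0`. Integrating this rate over `[s, t]` and exchanging the order of
integration on the rectangle `[0, l] × [s, t]` gives `E(t) − E(s) ≤ 0`. -/

open Function

section Calculus

variable {E : Type*} [NormedAddCommGroup E] [NormedSpace ℝ E]

theorem integral_eq_sub_of_hasDerivWithinAt_Icc [CompleteSpace E] {f f' : ℝ → E} {a b : ℝ}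
    (hab : a ≤ b)
    (hf : ∀ x ∈ Icc a b, HasDerivWithinAt f (f' x) (Icc a b) x)
    (hf' : ContinuousOn f' (Icc a b)) :
    ∫ x in a..b, f' x = f b - f a :=
  integral_eq_sub_of_hasDeriv_right_of_le hab (fun x hx => (hf x hx).continuousWithinAt)
    (fun x hx => (hf x (Ioo_subset_Icc_self hx)).mono_of_mem_nhdsWithin
      (Icc_mem_nhdsGT_of_mem ⟨hx.1.le, hx.2⟩))
    (hf'.intervalIntegrable_of_Icc hab)

theorem integral_integral_swap_of_continuousOn_Icc {f : ℝ → ℝ → E} {a b s t : ℝ}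
    (hab : a ≤ b) (hst : s ≤ t) (hf : ContinuousOn (uncurry f) (Icc a b ×ˢ Icc s t)) :
    ∫ x in a..b, ∫ y in s..t, f x y = ∫ y in s..t, ∫ x in a..b, f x y := by
  have hint : Integrable (uncurry f)
      ((volume.restrict (Ioc a b)).prod (volume.restrict (Ioc s t))) := by
    rw [Measure.prod_restrict, ← Measure.volume_eq_prod]
    exact (hf.integrableOn_compact (isCompact_Icc.prod isCompact_Icc)).mono_set
      (prod_mono Ioc_subset_Icc_self Ioc_subset_Icc_self)
  simp only [integral_of_le hab, integral_of_le hst]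
  exact integral_integral_swap hint

theorem integral_sub_integral_eq_integral_integral_of_hasDerivWithinAt [CompleteSpace E]
    {w w' : ℝ → ℝ → E} {a b s t : ℝ} (hab : a ≤ b) (hst : s ≤ t)
    (hw : ContinuousOn (uncurry w) (Icc a b ×ˢ Icc s t))
    (hw' : ContinuousOn (uncurry w') (Icc a b ×ˢ Icc s t))
    (hd : ∀ x ∈ Icc a b, ∀ τ ∈ Icc s t, HasDerivWithinAt (w x) (w' x τ) (Icc s t) τ) :
    (∫ x in a..b, w x t) - ∫ x in a..b, w x s = ∫ τ in s..t, ∫ x in a..b, w' x τ := by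
  have hint : ∀ τ ∈ Icc s t, IntervalIntegrable (fun x => w x τ) volume a b := fun τ hτ =>
    (hw.uncurry_right τ hτ).intervalIntegrable_of_Icc hab
  calc (∫ x in a..b, w x t) - ∫ x in a..b, w x s
      = ∫ x in a..b, (w x t - w x s) :=
        (integral_sub (hint t ⟨hst, le_rfl⟩) (hint s ⟨le_rfl, hst⟩)).symm
    _ = ∫ x in a..b, ∫ τ in s..t, w' x τ := by
        refine integral_congr fun x hx => ?_
        rw [uIcc_of_le hab] at hx
        exact (integral_eq_sub_of_hasDerivWithinAt_Icc hst (hd x hx)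
          (hw'.uncurry_left x hx)).symm
    _ = ∫ τ in s..t, ∫ x in a..b, w' x τ :=
        integral_integral_swap_of_continuousOn_Icc hab hst hw'

end Calculus

theorem gk_integral_energyRate_nonpos {l ρ c τq μ2 k : ℝ} (hl : 0 ≤ l) (hμ2 : 0 ≤ μ2)
    (hk : 0 < k) {T q Tt Tx qt qx qxx : ℝ → ℝ}
    (hTx : ∀ x ∈ Icc 0 l, HasDerivWithinAt T (Tx x) (Icc 0 l) x)
    (hqx : ∀ x ∈ Icc 0 l, HasDerivWithinAt q (qx x) (Icc 0 l) x)
    (hqxx : ∀ x ∈ Icc 0 l, HasDerivWithinAt qx (qxx x) (Icc 0 l) x)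
    (hcTx : ContinuousOn Tx (Icc 0 l)) (hcqxx : ContinuousOn qxx (Icc 0 l))
    (pde1 : ∀ x ∈ Ioo 0 l, ρ * c * Tt x + qx x = 0)
    (pde2 : ∀ x ∈ Ioo 0 l, τq * qt x + q x - μ2 * qxx x + k * Tx x = 0)
    (bc0 : q 0 = 0) (bcl : q l = 0) :
    ∫ x in 0..l, (ρ * c * (T x * Tt x) + τq / k * (q x * qt x)) ≤ 0 := by
  have hcT : ContinuousOn T (Icc 0 l) := fun x hx => (hTx x hx).continuousWithinAt
  have hcq : ContinuousOn q (Icc 0 l) := fun x hx => (hqx x hx).continuousWithinAt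
  have hcqx : ContinuousOn qx (Icc 0 l) := fun x hx => (hqxx x hx).continuousWithinAt
  set flux' : ℝ → ℝ := fun x =>
    μ2 / k * (qx x * qx x + q x * qxx x) - (Tx x * q x + T x * qx x)
  have hcflux' : ContinuousOn flux' (Icc 0 l) :=
    (continuousOn_const.mul ((hcqx.mul hcqx).add (hcq.mul hcqxx))).sub
      ((hcTx.mul hcq).add (hcT.mul hcqx))
  have hflux : ∫ x in 0..l, flux' x = 0 := by
    rw [integral_eq_sub_of_hasDerivWithinAt_Icc (f := fun x => μ2 / k * (q x * qx x) - T x * q x)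
      hl (fun x hx => (((hqx x hx).mul (hqxx x hx)).const_mul _).sub ((hTx x hx).mul (hqx x hx)))
      hcflux', bc0, bcl]
    simp
  set dissipation : ℝ → ℝ := fun x => (μ2 * qx x ^ 2 + q x ^ 2) / k
  have hcdissipation : ContinuousOn dissipation (Icc 0 l) :=
    ((continuousOn_const.mul (hcqx.pow 2)).add (hcq.pow 2)).div_const k
  have hrate : EqOn (fun x => ρ * c * (T x * Tt x) + τq / k * (q x * qt x))
      (fun x => flux' x - dissipation x) (Ioo 0 l) := by
    intro x hx
    simp only [flux', dissipation]
    field_simp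
    linear_combination (k * T x) * pde1 x hx + q x * pde2 x hx
  have hdissipation : 0 ≤ ∫ x in 0..l, dissipation x :=
    integral_nonneg hl fun x _ => by positivity
  rw [integral_congr_Ioo_of_le hl hrate, integral_sub (hcflux'.intervalIntegrable_of_Icc hl)
    (hcdissipation.intervalIntegrable_of_Icc hl), hflux]
  linarith

namespace IsGKSolution

variable {l ρ c τq μ2 k : ℝ} {T q Tt Tx qt qx qxx : ℝ → ℝ → ℝ}

theorem integral_energyRate_nonpos (h : IsGKSolution l ρ c τq μ2 k T q Tt Tx qt qx qxx)
    (hl : 0 ≤ l) (hμ2 : 0 ≤ μ2) (hk : 0 < k) {τ : ℝ} (hτ : 0 < τ) :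
    ∫ x in 0..l, (ρ * c * (T x τ * Tt x τ) + τq / k * (q x τ * qt x τ)) ≤ 0 :=
  gk_integral_energyRate_nonpos hl hμ2 hk
    (fun x hx => h.hTx x hx τ hτ.le) (fun x hx => h.hqx x hx τ hτ.le)
    (fun x hx => h.hqxx x hx τ hτ.le)
    (ContinuousOn.uncurry_right (f := Tx) τ hτ.le h.contTx)
    (ContinuousOn.uncurry_right (f := qxx) τ hτ.le h.contqxx)
    (fun x hx => h.pde1 x hx τ hτ) (fun x hx => h.pde2 x hx τ hτ)
    (h.bc0 τ hτ.le) (h.bcl τ hτ.le)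

theorem energy_sub_energy (h : IsGKSolution l ρ c τq μ2 k T q Tt Tx qt qx qxx)
    (hl : 0 ≤ l) {s t : ℝ} (hs : 0 ≤ s) (hst : s ≤ t) :
    gkEnergy l ρ c τq k T q t - gkEnergy l ρ c τq k T q s
      = ∫ τ in s..t, ∫ x in 0..l, (ρ * c * (T x τ * Tt x τ) + τq / k * (q x τ * qt x τ)) := by
  have hJ : Icc s t ⊆ Ici 0 := fun τ hτ => hs.trans hτ.1
  have hR : Icc 0 l ×ˢ Icc s t ⊆ Icc 0 l ×ˢ Ici 0 := prod_mono subset_rfl hJ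
  have hE : ∀ τ ∈ Icc s t, gkEnergy l ρ c τq k T q τ
      = ∫ x in 0..l, (ρ * c / 2 * T x τ ^ 2 + τq / (2 * k) * q x τ ^ 2) := by
    intro τ hτ
    rw [gkEnergy, intervalIntegral.integral_add, intervalIntegral.integral_const_mul,
      intervalIntegral.integral_const_mul]
    · exact (continuousOn_const.mul ((ContinuousOn.uncurry_right (f := T) τ (hJ hτ)
        h.contT).pow 2)).intervalIntegrable_of_Icc hl
    · exact (continuousOn_const.mul ((ContinuousOn.uncurry_right (f := q) τ (hJ hτ)
        h.contq).pow 2)).intervalIntegrable_of_Icc hl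
  rw [hE t ⟨hst, le_rfl⟩, hE s ⟨le_rfl, hst⟩]
  refine integral_sub_integral_eq_integral_integral_of_hasDerivWithinAt
    (w := fun x τ => ρ * c / 2 * T x τ ^ 2 + τq / (2 * k) * q x τ ^ 2)
    (w' := fun x τ => ρ * c * (T x τ * Tt x τ) + τq / k * (q x τ * qt x τ)) hl hst ?_ ?_ ?_
  · exact (continuousOn_const.mul ((h.contT.mono hR).pow 2)).add
      (continuousOn_const.mul ((h.contq.mono hR).pow 2))
  · exact (continuousOn_const.mul ((h.contT.mono hR).mul (h.contTt.mono hR))).add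
      (continuousOn_const.mul ((h.contq.mono hR).mul (h.contqt.mono hR)))
  · intro x hx τ hτ
    convert ((((h.hTt x hx τ (hJ hτ)).mono hJ).fun_pow 2).const_mul (ρ * c / 2)).fun_add
      ((((h.hqt x hx τ (hJ hτ)).mono hJ).fun_pow 2).const_mul (τq / (2 * k))) using 1
    push_cast
    ring

end IsGKSolution

theorem gk_energy_nonincreasing_general
    (l ρ c τq μ2 k : ℝ) (hl : 0 < l) (hμ2 : 0 < μ2) (hk : 0 < k)
    (T q Tt Tx qt qx qxx : ℝ → ℝ → ℝ)
    (hgk : IsGKSolution l ρ c τq μ2 k T q Tt Tx qt qx qxx) :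
    ∀ s t : ℝ, 0 ≤ s → s ≤ t →
      gkEnergy l ρ c τq k T q t ≤ gkEnergy l ρ c τq k T q s := by
  intro s t hs hst
  rw [← sub_nonpos, hgk.energy_sub_energy hl.le hs hst, integral_of_le hst]
  exact setIntegral_nonpos measurableSet_Ioc fun τ hτ =>
    hgk.integral_energyRate_nonpos hl.le hμ2.le hk (hs.trans_lt hτ.1)

/-- for a classical solution of the Guyer–Krumhansl system, the
functional energy is non-increasing: `E(t) ≤ E(s)` for all `0 ≤ s ≤ t`. -/
theorem gk_energy_nonincreasing
    (l ρ c τq μ2 k : ℝ) (hl : 0 < l) (hρ : 0 < ρ) (hc : 0 < c)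
    (hτq : 0 < τq) (hμ2 : 0 < μ2) (hk : 0 < k)
    (T q Tt Tx qt qx qxx : ℝ → ℝ → ℝ)
    (hgk : IsGKSolution l ρ c τq μ2 k T q Tt Tx qt qx qxx) :
    ∀ s t : ℝ, 0 ≤ s → s ≤ t →
      gkEnergy l ρ c τq k T q t ≤ gkEnergy l ρ c τq k T q s :=
  gk_energy_nonincreasing_general l ρ c τq μ2 k hl hμ2 hk T q Tt Tx qt qx qxx hgk
end

section
/- Let u : [0,l] → ℝ be continuously differentiable and v : [0,l] → ℝ be twice continuously differentiable with v(0) = v(l) = 0. Then ρc ∫_0^l u(x)·(−(1/(ρc)) v'(x)) dx + (τ_q/k) ∫_0^l v(x)·((1/τ_q)(−v(x) + μ² v''(x) − k u'(x))) dx = −(1/k)∫_0^l v(x)² dx − (μ²/k)∫_0^l v'(x)² dx; in particular this quantity is ≤ 0 (dissipativity of the Guyer–Krumhansl generator). -/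
open Set MeasureTheory intervalIntegral

/-- dissipativity of the Guyer–Krumhansl generator. For `u` continuously
differentiable and `v` twice continuously differentiable on `[0,l]` with
`v(0) = v(l) = 0`, the phase-space inner product `⟨A(u,v),(u,v)⟩` equals
`−(1/k)∫₀ˡ v² − (μ²/k)∫₀ˡ (v')²`, which is `≤ 0`. -/
theorem gk_generator_dissipative
    (l ρ c τq μ2 k : ℝ) (hl : 0 < l) (hρ : 0 < ρ) (hc : 0 < c)
    (hτq : 0 < τq) (hμ2 : 0 < μ2) (hk : 0 < k)
    (u v u' v' v'' : ℝ → ℝ)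
    (hu' : ∀ x ∈ Icc (0:ℝ) l, HasDerivWithinAt u (u' x) (Icc (0:ℝ) l) x)
    (hv' : ∀ x ∈ Icc (0:ℝ) l, HasDerivWithinAt v (v' x) (Icc (0:ℝ) l) x)
    (hv'' : ∀ x ∈ Icc (0:ℝ) l, HasDerivWithinAt v' (v'' x) (Icc (0:ℝ) l) x)
    (hu'c : ContinuousOn u' (Icc (0:ℝ) l))
    (hv''c : ContinuousOn v'' (Icc (0:ℝ) l))
    (hv0 : v 0 = 0) (hvl : v l = 0) :
    ρ * c * (∫ x in (0:ℝ)..l, u x * (-(1 / (ρ * c)) * v' x))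
        + τq / k * (∫ x in (0:ℝ)..l, v x * (1 / τq * (-v x + μ2 * v'' x - k * u' x)))
      = -(1 / k) * (∫ x in (0:ℝ)..l, (v x) ^ 2)
        - μ2 / k * (∫ x in (0:ℝ)..l, (v' x) ^ 2)
    ∧ ρ * c * (∫ x in (0:ℝ)..l, u x * (-(1 / (ρ * c)) * v' x))
        + τq / k * (∫ x in (0:ℝ)..l, v x * (1 / τq * (-v x + μ2 * v'' x - k * u' x)))
      ≤ 0 := by
  have h0l : (0:ℝ) ≤ l := hl.le
  have hIcc : uIcc (0:ℝ) l = Icc (0:ℝ) l := uIcc_of_le h0l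
  have hucont : ContinuousOn u (Icc (0:ℝ) l) := fun x hx => (hu' x hx).continuousWithinAt
  have hvcont : ContinuousOn v (Icc (0:ℝ) l) := fun x hx => (hv' x hx).continuousWithinAt
  have hv'cont : ContinuousOn v' (Icc (0:ℝ) l) := fun x hx => (hv'' x hx).continuousWithinAt
  -- interval integrability of the relevant products
  have int_uv' : IntervalIntegrable (fun x => u x * v' x) volume 0 l :=
    (hucont.mul hv'cont).intervalIntegrable_of_Icc h0l
  have int_u'v : IntervalIntegrable (fun x => u' x * v x) volume 0 l :=
    (hu'c.mul hvcont).intervalIntegrable_of_Icc h0l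
  have int_vu' : IntervalIntegrable (fun x => v x * u' x) volume 0 l :=
    (hvcont.mul hu'c).intervalIntegrable_of_Icc h0l
  have int_vv'' : IntervalIntegrable (fun x => v x * v'' x) volume 0 l :=
    (hvcont.mul hv''c).intervalIntegrable_of_Icc h0l
  have int_v2 : IntervalIntegrable (fun x => (v x) ^ 2) volume 0 l :=
    (hvcont.pow 2).intervalIntegrable_of_Icc h0l
  have int_v'2 : IntervalIntegrable (fun x => (v' x) ^ 2) volume 0 l :=
    (hv'cont.pow 2).intervalIntegrable_of_Icc h0l
  -- first integration by parts: ∫ (u'v + uv') = [uv] = 0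
  have key1 : (∫ x in (0:ℝ)..l, (u' x * v x + u x * v' x)) = u l * v l - u 0 * v 0 := by
    apply intervalIntegral.integral_eq_sub_of_hasDeriv_right_of_le h0l
      (hucont.mul hvcont)
    · intro x hx
      have hxI : Icc (0:ℝ) l ∈ nhds x := Icc_mem_nhds hx.1 hx.2
      have hxm : x ∈ Icc (0:ℝ) l := Ioo_subset_Icc_self hx
      exact (((hu' x hxm).hasDerivAt hxI).mul ((hv' x hxm).hasDerivAt hxI)).hasDerivWithinAt
    · exact int_u'v.add int_uv'
  -- second integration by parts: ∫ ((v')² + v v'') = [v v'] = 0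
  have key2 : (∫ x in (0:ℝ)..l, ((v' x) ^ 2 + v x * v'' x)) = v l * v' l - v 0 * v' 0 := by
    apply intervalIntegral.integral_eq_sub_of_hasDeriv_right_of_le h0l
      (hvcont.mul hv'cont)
    · intro x hx
      have hxI : Icc (0:ℝ) l ∈ nhds x := Icc_mem_nhds hx.1 hx.2
      have hxm : x ∈ Icc (0:ℝ) l := Ioo_subset_Icc_self hx
      have := (((hv' x hxm).hasDerivAt hxI).mul ((hv'' x hxm).hasDerivAt hxI)).hasDerivWithinAt
        (s := Ioi x)
      convert this using 1
      ring
    · exact (int_v'2.add int_vv'')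
  rw [hv0, hvl] at key1 key2
  simp only [mul_zero, zero_mul, sub_zero, sub_self] at key1 key2
  have split1 : (∫ x in (0:ℝ)..l, (u' x * v x + u x * v' x))
      = (∫ x in (0:ℝ)..l, u' x * v x) + ∫ x in (0:ℝ)..l, u x * v' x :=
    intervalIntegral.integral_add int_u'v int_uv'
  have split2 : (∫ x in (0:ℝ)..l, ((v' x) ^ 2 + v x * v'' x))
      = (∫ x in (0:ℝ)..l, (v' x) ^ 2) + ∫ x in (0:ℝ)..l, v x * v'' x :=
    intervalIntegral.integral_add int_v'2 int_vv''
  have huv' : (∫ x in (0:ℝ)..l, u x * v' x) = -∫ x in (0:ℝ)..l, v x * u' x := by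
    have : (∫ x in (0:ℝ)..l, u' x * v x) = ∫ x in (0:ℝ)..l, v x * u' x := by
      congr 1; ext x; ring
    rw [split1, this] at key1
    linarith
  have hvv'' : (∫ x in (0:ℝ)..l, v x * v'' x) = -∫ x in (0:ℝ)..l, (v' x) ^ 2 := by
    rw [split2] at key2; linarith
  -- rewrite the two integrals in the goal
  have e1 : (∫ x in (0:ℝ)..l, u x * (-(1 / (ρ * c)) * v' x))
      = -(1 / (ρ * c)) * ∫ x in (0:ℝ)..l, u x * v' x := by
    rw [← intervalIntegral.integral_const_mul]
    congr 1; ext x; ring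
  have e2 : (∫ x in (0:ℝ)..l, v x * (1 / τq * (-v x + μ2 * v'' x - k * u' x)))
      = (1 / τq) * ((-(∫ x in (0:ℝ)..l, (v x) ^ 2))
          + μ2 * (∫ x in (0:ℝ)..l, v x * v'' x) - k * ∫ x in (0:ℝ)..l, v x * u' x) := by
    have comb : (∫ x in (0:ℝ)..l, (-(v x ^ 2) + μ2 * (v x * v'' x) - k * (v x * u' x)))
        = (-(∫ x in (0:ℝ)..l, (v x) ^ 2))
          + μ2 * (∫ x in (0:ℝ)..l, v x * v'' x) - k * ∫ x in (0:ℝ)..l, v x * u' x := by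
      have ia1 : IntervalIntegrable (fun x => -(v x ^ 2)) volume 0 l := int_v2.neg
      have ia2 : IntervalIntegrable (fun x => μ2 * (v x * v'' x)) volume 0 l :=
        int_vv''.const_mul μ2
      have ia3 : IntervalIntegrable (fun x => k * (v x * u' x)) volume 0 l :=
        int_vu'.const_mul k
      rw [intervalIntegral.integral_sub (ia1.add ia2) ia3,
        intervalIntegral.integral_add ia1 ia2,
        intervalIntegral.integral_neg, intervalIntegral.integral_const_mul,
        intervalIntegral.integral_const_mul]
    rw [← comb, ← intervalIntegral.integral_const_mul]
    congr 1; ext x; ring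
  have hρc : ρ * c ≠ 0 := by positivity
  have hτq' : τq ≠ 0 := hτq.ne'
  have hk' : k ≠ 0 := hk.ne'
  have main : ρ * c * (∫ x in (0:ℝ)..l, u x * (-(1 / (ρ * c)) * v' x))
        + τq / k * (∫ x in (0:ℝ)..l, v x * (1 / τq * (-v x + μ2 * v'' x - k * u' x)))
      = -(1 / k) * (∫ x in (0:ℝ)..l, (v x) ^ 2)
        - μ2 / k * (∫ x in (0:ℝ)..l, (v' x) ^ 2) := by
    rw [e1, e2, huv', hvv'']
    field_simp
    ring
  refine ⟨main, ?_⟩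
  rw [main]
  have hnn1 : 0 ≤ ∫ x in (0:ℝ)..l, (v x) ^ 2 :=
    intervalIntegral.integral_nonneg h0l (fun x _ => sq_nonneg _)
  have hnn2 : 0 ≤ ∫ x in (0:ℝ)..l, (v' x) ^ 2 :=
    intervalIntegral.integral_nonneg h0l (fun x _ => sq_nonneg _)
  have h1 : 0 ≤ 1 / k := by positivity
  have h2 : 0 ≤ μ2 / k := by positivity
  nlinarith [mul_nonneg h1 hnn1, mul_nonneg h2 hnn2]
end

section
/- Let (T, q) be a classical solution of the Guyer–Krumhansl system on (0,l) with boundary conditions q(0,t) = q(l,t) = 0, let F(t) := (ρc/2)∫_0^l (∫_x^l T(s,t) ds)² dx + (ρc μ²/2)∫_0^l T(x,t)² dx + τ_q ∫_0^l q(x,t)(∫_x^l T(s,t) ds) dx, and define the Lyapunov functional 𝓛(t) := (2l² + 2μ² + τ_q k/(ρc)) E(t) + F(t). Then for all t ≥ 0, (l² + μ²) E(t) ≤ 𝓛(t) ≤ (3l² + 3μ² + 2τ_q k/(ρc)) E(t). -/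
/-!
Write `A = ∫₀ˡ T²`, `B = ∫₀ˡ q²` and `G(x) = ∫ₓˡ T`. Cauchy–Schwarz gives `G(x)² ≤ l A`, hence
`∫₀ˡ G² ≤ l² A`, and then `(∫₀ˡ q G)² ≤ l² A B`, so that by AM-GM
`|∫₀ˡ q G| ≤ l² B/(2k) + k A/2`. With `w = τ_q k/(ρc)` this traps `F` between `-(l² + w) E` and
`(l² + μ² + w) E`; adding `(2l² + 2μ² + w) E` gives both bounds.
-/

open Set MeasureTheory intervalIntegral

/-- The auxiliary functional
`F(t) = (ρc/2)∫₀ˡ (∫ₓˡ T ds)² dx + (ρcμ²/2)∫₀ˡ T² dx + τ_q ∫₀ˡ q (∫ₓˡ T ds) dx`. -/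
noncomputable def gkF (l ρ c τq μ2 : ℝ) (T q : ℝ → ℝ → ℝ) (t : ℝ) : ℝ :=
  ρ * c / 2 * (∫ x in (0:ℝ)..l, (∫ s in x..l, T s t) ^ 2)
    + ρ * c * μ2 / 2 * (∫ x in (0:ℝ)..l, (T x t) ^ 2)
    + τq * (∫ x in (0:ℝ)..l, q x t * (∫ s in x..l, T s t))

/-- The boundary term `C_T(t) = (μ² ∂ₓq(0,t) − k T(0,t)) ∫₀ˡ T(s,t) ds`. -/
noncomputable def gkCT (l μ2 k : ℝ) (T qx : ℝ → ℝ → ℝ) (t : ℝ) : ℝ :=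
  (μ2 * qx 0 t - k * T 0 t) * ∫ s in (0:ℝ)..l, T s t

/-- The Lyapunov functional `𝓛(t) = (2l² + 2μ² + τ_q k/(ρc)) E(t) + F(t)`. -/
noncomputable def gkL (l ρ c τq μ2 k : ℝ) (T q : ℝ → ℝ → ℝ) (t : ℝ) : ℝ :=
  (2 * l ^ 2 + 2 * μ2 + τq * k / (ρ * c)) * gkEnergy l ρ c τq k T q t
    + gkF l ρ c τq μ2 T q t

lemma ContinuousOn.apply_right {α β γ : Type*} [TopologicalSpace α] [TopologicalSpace β]
    [TopologicalSpace γ] {f : α → β → γ} {s : Set α} {u : Set β} {t : β}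
    (hf : ContinuousOn (fun p : α × β => f p.1 p.2) (s ×ˢ u)) (ht : t ∈ u) :
    ContinuousOn (fun x => f x t) s :=
  hf.comp (continuous_id.prodMk continuous_const).continuousOn fun _ hx => ⟨hx, ht⟩

section IntervalIntegralBounds

variable {a b : ℝ} {f g : ℝ → ℝ}

theorem sq_integral_mul_le_integral_sq_mul_integral_sq (hab : a ≤ b)
    (hf : IntervalIntegrable (fun x => f x ^ 2) volume a b)
    (hg : IntervalIntegrable (fun x => g x ^ 2) volume a b)
    (hfg : IntervalIntegrable (fun x => f x * g x) volume a b) :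
    (∫ x in a..b, f x * g x) ^ 2 ≤ (∫ x in a..b, f x ^ 2) * ∫ x in a..b, g x ^ 2 := by
  have hquad : ∀ s : ℝ, 0 ≤ (∫ x in a..b, g x ^ 2) * (s * s)
      + (-2 * ∫ x in a..b, f x * g x) * s + ∫ x in a..b, f x ^ 2 := fun s => by
    have hsq : ∀ x, (f x - s * g x) ^ 2 = f x ^ 2 - 2 * s * (f x * g x) + s ^ 2 * g x ^ 2 :=
      fun x => by ring
    have hexp : ∫ x in a..b, (f x - s * g x) ^ 2 = (∫ x in a..b, g x ^ 2) * (s * s)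
        + (-2 * ∫ x in a..b, f x * g x) * s + ∫ x in a..b, f x ^ 2 := by
      simp_rw [hsq]
      rw [integral_add (hf.sub (hfg.const_mul _)) (hg.const_mul _),
        integral_sub hf (hfg.const_mul _), intervalIntegral.integral_const_mul,
        intervalIntegral.integral_const_mul]
      ring
    exact hexp ▸ integral_nonneg hab fun x _ => sq_nonneg _
  have hdisc := discrim_le_zero hquad
  rw [discrim] at hdisc
  linarith

theorem sq_integral_le_mul_integral_sq (hab : a ≤ b) (hf : ContinuousOn f (Icc a b)) :
    (∫ x in a..b, f x) ^ 2 ≤ (b - a) * ∫ x in a..b, f x ^ 2 := by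
  have hf' : ContinuousOn f (uIcc a b) := by rwa [uIcc_of_le hab]
  have := sq_integral_mul_le_integral_sq_mul_integral_sq (g := fun _ => 1) hab
    (hf'.pow 2).intervalIntegrable intervalIntegrable_const (by simpa using hf'.intervalIntegrable)
  simpa [mul_comm] using this

theorem continuousOn_integral_tail (hab : a ≤ b) (hf : ContinuousOn f (Icc a b)) :
    ContinuousOn (fun x => ∫ s in x..b, f s) (Icc a b) := by
  have := continuousOn_primitive_interval_left (μ := volume) (a := a) (b := b) (f := f)
    (by rw [uIcc_of_le hab]; exact hf.integrableOn_Icc)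
  rwa [uIcc_of_le hab] at this

theorem sq_integral_tail_le (hf : ContinuousOn f (Icc a b)) {x : ℝ} (hx : x ∈ Icc a b) :
    (∫ s in x..b, f s) ^ 2 ≤ (b - a) * ∫ s in a..b, f s ^ 2 := by
  have hsub : ∀ {y z}, y ∈ Icc a b → z ∈ Icc a b →
      IntervalIntegrable (fun s => f s ^ 2) volume y z := fun hy hz =>
    ((hf.pow 2).mono (uIcc_subset_Icc hy hz)).intervalIntegrable
  have hb : b ∈ Icc a b := ⟨hx.1.trans hx.2, le_rfl⟩
  have ha : a ∈ Icc a b := ⟨le_rfl, hx.1.trans hx.2⟩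
  have hhead : 0 ≤ ∫ s in a..x, f s ^ 2 := integral_nonneg hx.1 fun _ _ => sq_nonneg _
  have htail : 0 ≤ ∫ s in x..b, f s ^ 2 := integral_nonneg hx.2 fun _ _ => sq_nonneg _
  rw [← integral_add_adjacent_intervals (hsub ha hx) (hsub hx hb)]
  calc (∫ s in x..b, f s) ^ 2
      ≤ (b - x) * ∫ s in x..b, f s ^ 2 :=
        sq_integral_le_mul_integral_sq hx.2 (hf.mono (Icc_subset_Icc hx.1 le_rfl))
    _ ≤ (b - a) * ((∫ s in a..x, f s ^ 2) + ∫ s in x..b, f s ^ 2) := by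
        nlinarith [mul_nonneg (sub_nonneg.2 hx.1) htail,
          mul_nonneg (sub_nonneg.2 (hx.1.trans hx.2)) hhead]

theorem integral_sq_integral_tail_le (hab : a ≤ b) (hf : ContinuousOn f (Icc a b)) :
    ∫ x in a..b, (∫ s in x..b, f s) ^ 2 ≤ (b - a) ^ 2 * ∫ s in a..b, f s ^ 2 := by
  have hG := continuousOn_integral_tail hab hf
  calc ∫ x in a..b, (∫ s in x..b, f s) ^ 2
      ≤ ∫ _ in a..b, (b - a) * ∫ s in a..b, f s ^ 2 :=
        integral_mono_on hab ((hG.pow 2).intervalIntegrable_of_Icc hab) intervalIntegrable_const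
          fun x hx => sq_integral_tail_le hf hx
    _ = (b - a) ^ 2 * ∫ s in a..b, f s ^ 2 := by
        rw [intervalIntegral.integral_const, smul_eq_mul]; ring

theorem abs_integral_mul_integral_tail_le {k : ℝ} (hk : 0 < k) (hab : a ≤ b)
    (hf : ContinuousOn f (Icc a b)) (hg : ContinuousOn g (Icc a b)) :
    |∫ x in a..b, g x * ∫ s in x..b, f s|
      ≤ (b - a) ^ 2 / (2 * k) * (∫ x in a..b, g x ^ 2) + k / 2 * ∫ x in a..b, f x ^ 2 := by
  have hG := continuousOn_integral_tail hab hf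
  have hcs := sq_integral_mul_le_integral_sq_mul_integral_sq hab
    ((hg.pow 2).intervalIntegrable_of_Icc hab) ((hG.pow 2).intervalIntegrable_of_Icc hab)
    ((hg.mul hG).intervalIntegrable_of_Icc hab)
  have hg2 : 0 ≤ ∫ x in a..b, g x ^ 2 := integral_nonneg hab fun _ _ => sq_nonneg _
  have hf2 : 0 ≤ ∫ x in a..b, f x ^ 2 := integral_nonneg hab fun _ _ => sq_nonneg _
  refine abs_le_of_sq_le_sq ?_ (by positivity)
  calc (∫ x in a..b, g x * ∫ s in x..b, f s) ^ 2
      ≤ (∫ x in a..b, g x ^ 2) * ((b - a) ^ 2 * ∫ x in a..b, f x ^ 2) :=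
        hcs.trans (mul_le_mul_of_nonneg_left (integral_sq_integral_tail_le hab hf) hg2)
    _ = 4 * ((b - a) ^ 2 / (2 * k) * ∫ x in a..b, g x ^ 2) * (k / 2 * ∫ x in a..b, f x ^ 2) := by
        field_simp; ring
    _ ≤ _ := four_mul_le_sq_add _ _

end IntervalIntegralBounds

section GuyerKrumhansl

variable {l ρ c τq μ2 k : ℝ} {T q : ℝ → ℝ → ℝ} {t : ℝ}

theorem gkEnergy_nonneg (hl : 0 ≤ l) (hρ : 0 ≤ ρ) (hc : 0 ≤ c) (hτq : 0 ≤ τq) (hk : 0 ≤ k) :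
    0 ≤ gkEnergy l ρ c τq k T q t := by
  have hA : 0 ≤ ∫ x in (0:ℝ)..l, T x t ^ 2 := integral_nonneg hl fun _ _ => sq_nonneg _
  have hB : 0 ≤ ∫ x in (0:ℝ)..l, q x t ^ 2 := integral_nonneg hl fun _ _ => sq_nonneg _
  unfold gkEnergy
  positivity

variable (hl : 0 ≤ l) (hρ : 0 < ρ) (hc : 0 < c) (hτq : 0 ≤ τq) (hμ2 : 0 ≤ μ2) (hk : 0 < k)
  (hT : ContinuousOn (fun x => T x t) (Icc 0 l)) (hq : ContinuousOn (fun x => q x t) (Icc 0 l))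
include hl hρ hc hτq hμ2 hk hT hq

theorem neg_mul_gkEnergy_le_gkF :
    -(l ^ 2 + τq * k / (ρ * c)) * gkEnergy l ρ c τq k T q t ≤ gkF l ρ c τq μ2 T q t := by
  have hcross := abs_integral_mul_integral_tail_le hk hl hT hq
  rw [sub_zero, abs_le] at hcross
  have hG : 0 ≤ ∫ x in (0:ℝ)..l, (∫ s in x..l, T s t) ^ 2 :=
    integral_nonneg hl fun _ _ => sq_nonneg _
  have hA : 0 ≤ ∫ x in (0:ℝ)..l, T x t ^ 2 := integral_nonneg hl fun _ _ => sq_nonneg _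
  have hwB : 0 ≤ τq * k / (ρ * c) * (τq / (2 * k) * ∫ x in (0:ℝ)..l, q x t ^ 2) := by
    have : 0 ≤ ∫ x in (0:ℝ)..l, q x t ^ 2 := integral_nonneg hl fun _ _ => sq_nonneg _
    positivity
  have hw : τq * k / (ρ * c) * (ρ * c / 2) = τq * k / 2 := by field_simp
  unfold gkEnergy gkF
  linear_combination τq * hcross.1 - (∫ x in (0:ℝ)..l, T x t ^ 2) * hw + hwB + (ρ * c / 2) * hG
    + (ρ * c * (l ^ 2 + μ2) / 2) * hA

theorem gkF_le_mul_gkEnergy :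
    gkF l ρ c τq μ2 T q t ≤ (l ^ 2 + μ2 + τq * k / (ρ * c)) * gkEnergy l ρ c τq k T q t := by
  have hcross := abs_integral_mul_integral_tail_le hk hl hT hq
  rw [sub_zero, abs_le] at hcross
  have hG := integral_sq_integral_tail_le hl hT
  rw [sub_zero] at hG
  have hB : 0 ≤ (μ2 + τq * k / (ρ * c)) * (τq / (2 * k) * ∫ x in (0:ℝ)..l, q x t ^ 2) := by
    have : 0 ≤ ∫ x in (0:ℝ)..l, q x t ^ 2 := integral_nonneg hl fun _ _ => sq_nonneg _
    positivity
  have hw : τq * k / (ρ * c) * (ρ * c / 2) = τq * k / 2 := by field_simp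
  unfold gkEnergy gkF
  linear_combination τq * hcross.2 - (∫ x in (0:ℝ)..l, T x t ^ 2) * hw + hB + (ρ * c / 2) * hG

end GuyerKrumhansl

/-- for a classical solution of the Guyer–Krumhansl system, the
Lyapunov functional is equivalent to the energy:
`(l² + μ²) E(t) ≤ 𝓛(t) ≤ (3l² + 3μ² + 2τ_q k/(ρc)) E(t)` for all `t ≥ 0`. -/
theorem gk_lyapunov_equivalent
    (l ρ c τq μ2 k : ℝ) (hl : 0 < l) (hρ : 0 < ρ) (hc : 0 < c)
    (hτq : 0 < τq) (hμ2 : 0 < μ2) (hk : 0 < k)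
    (T q Tt Tx qt qx qxx : ℝ → ℝ → ℝ)
    (hgk : IsGKSolution l ρ c τq μ2 k T q Tt Tx qt qx qxx) :
    ∀ t : ℝ, 0 ≤ t →
      (l ^ 2 + μ2) * gkEnergy l ρ c τq k T q t ≤ gkL l ρ c τq μ2 k T q t
      ∧ gkL l ρ c τq μ2 k T q t
          ≤ (3 * l ^ 2 + 3 * μ2 + 2 * (τq * k / (ρ * c))) * gkEnergy l ρ c τq k T q t := by
  intro t ht
  have hT : ContinuousOn (fun x => T x t) (Icc 0 l) := hgk.contT.apply_right ht
  have hq : ContinuousOn (fun x => q x t) (Icc 0 l) := hgk.contq.apply_right ht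
  have hE : 0 ≤ gkEnergy l ρ c τq k T q t :=
    gkEnergy_nonneg hl.le hρ.le hc.le hτq.le hk.le
  have hF_ge := neg_mul_gkEnergy_le_gkF hl.le hρ hc hτq.le hμ2.le hk hT hq
  have hF_le := gkF_le_mul_gkEnergy hl.le hρ hc hτq.le hμ2.le hk hT hq
  unfold gkL
  constructor
  · linarith [mul_nonneg hμ2.le hE]
  · linarith
end

section
/- (Uniqueness of classical solutions.) Let (T₁, q₁) and (T₂, q₂) be two classical solutions of the Guyer–Krumhansl system on (0,l), both with boundary conditions q(0,t) = q(l,t) = 0, and with the same initial data T₁(x,0) = T₂(x,0) and q₁(x,0) = q₂(x,0) for all x ∈ [0,l]. Then T₁ = T₂ and q₁ = q₂ on [0,l] × [0,∞). -/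
open Set MeasureTheory intervalIntegral

/-!
Energy method. The difference of two solutions is again a solution, now with zero initial
data. For any solution, multiplying the equations by `T` and `q / k` and integrating over
`[0, l]` gives `E'(t) = -(1/k) ∫₀ˡ (q² + μ² q_x²) dx ≤ 0` for the energy `E = gkEnergy`: the
remaining terms form the `x`-derivative of the flux `μ²/k q q_x − T q`, which vanishes at the
ends because `q` does. So `E` is nonincreasing, nonnegative, and `E(0) = 0`; hence
`∫₀ˡ T² = ∫₀ˡ q² = 0` at every time, and `T = q = 0` by continuity.
-/

section ParametricIntegral

variable {a b : ℝ} {F F' : ℝ → ℝ → ℝ}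

theorem continuousOn_intervalIntegral_of_continuousOn_prod (hab : a ≤ b)
    (hF : ContinuousOn (fun p : ℝ × ℝ => F p.1 p.2) (Icc a b ×ˢ Ici 0)) :
    ContinuousOn (fun t => ∫ x in a..b, F x t) (Ici 0) := by
  intro t₀ ht₀
  obtain ⟨C, hC⟩ : ∃ C, ∀ p ∈ Icc a b ×ˢ Icc 0 (t₀ + 1), ‖F p.1 p.2‖ ≤ C :=
    (isCompact_Icc.prod isCompact_Icc).exists_bound_of_continuousOn
      (hF.mono (prod_mono_right Icc_subset_Ici_self))
  refine continuousWithinAt_of_dominated_interval (bound := fun _ => C) ?_ ?_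
    intervalIntegrable_const ?_
  · filter_upwards [self_mem_nhdsWithin] with t ht
    exact ((hF.uncurry_right (f := F) t ht).intervalIntegrable_of_Icc hab).def'
      |>.aestronglyMeasurable
  · filter_upwards [self_mem_nhdsWithin, nhdsWithin_le_nhds (Iio_mem_nhds (lt_add_one t₀))]
      with t ht₀ ht₁
    refine ae_of_all _ fun x hx => hC (x, t) ⟨?_, ht₀, le_of_lt ht₁⟩
    exact Ioc_subset_Icc_self (uIoc_of_le hab ▸ hx)
  · refine ae_of_all _ fun x hx => hF.uncurry_left (f := F) x ?_ t₀ ht₀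
    exact Ioc_subset_Icc_self (uIoc_of_le hab ▸ hx)

theorem hasDerivAt_intervalIntegral_of_continuousOn_prod (hab : a ≤ b)
    (hF : ContinuousOn (fun p : ℝ × ℝ => F p.1 p.2) (Icc a b ×ˢ Ici 0))
    (hF' : ContinuousOn (fun p : ℝ × ℝ => F' p.1 p.2) (Icc a b ×ˢ Ici 0))
    (hd : ∀ x ∈ Icc a b, ∀ t ∈ Ioi (0 : ℝ), HasDerivAt (F x) (F' x t) t)
    {t₀ : ℝ} (ht₀ : 0 < t₀) :
    HasDerivAt (fun t => ∫ x in a..b, F x t) (∫ x in a..b, F' x t₀) t₀ := by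
  have hnear : Icc (t₀ / 2) (2 * t₀) ⊆ Ici 0 := fun t ht =>
    mem_Ici.mpr (by linarith [ht.1])
  obtain ⟨C, hC⟩ : ∃ C, ∀ p ∈ Icc a b ×ˢ Icc (t₀ / 2) (2 * t₀), ‖F' p.1 p.2‖ ≤ C :=
    (isCompact_Icc.prod isCompact_Icc).exists_bound_of_continuousOn
      (hF'.mono (prod_mono_right hnear))
  have hmem : ∀ x ∈ uIoc a b, x ∈ Icc a b := fun x hx =>
    Ioc_subset_Icc_self (uIoc_of_le hab ▸ hx)
  have hint : ∀ t ≥ 0, IntervalIntegrable (F · t) volume a b := fun t ht =>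
    (hF.uncurry_right (f := F) t ht).intervalIntegrable_of_Icc hab
  refine (hasDerivAt_integral_of_dominated_loc_of_deriv_le (F := fun t x => F x t)
    (F' := fun t x => F' x t) (bound := fun _ => C)
    (Ioo_mem_nhds (by linarith : t₀ / 2 < t₀) (by linarith : t₀ < 2 * t₀)) ?_ (hint t₀ ht₀.le)
    (((hF'.uncurry_right (f := F') t₀ ht₀.le).intervalIntegrable_of_Icc hab).def'
      |>.aestronglyMeasurable) ?_ intervalIntegrable_const ?_).2
  · filter_upwards [Ioi_mem_nhds ht₀] with t ht
    exact (hint t (le_of_lt ht)).def'.aestronglyMeasurable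
  · exact ae_of_all _ fun x hx t ht => hC (x, t) ⟨hmem x hx, Ioo_subset_Icc_self ht⟩
  · exact ae_of_all _ fun x hx t ht => hd x (hmem x hx) t
      (mem_Ioi.mpr (by linarith [ht.1]))

end ParametricIntegral

theorem eqOn_zero_of_integral_sq_eq_zero {a b : ℝ} (hab : a < b) {f : ℝ → ℝ}
    (hf : ContinuousOn f (Icc a b)) (h : ∫ x in a..b, f x ^ 2 = 0) : EqOn f 0 (Icc a b) := by
  have hsq : ContinuousOn (fun x => f x ^ 2) (Icc a b) := hf.pow 2
  rw [integral_eq_zero_iff_of_le_of_nonneg_ae hab.le (ae_of_all _ fun x => sq_nonneg (f x))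
    (hsq.intervalIntegrable_of_Icc hab.le), Measure.restrict_congr_set Ioc_ae_eq_Icc] at h
  intro x hx
  simpa using Measure.eqOn_Icc_of_ae_eq volume hab.ne h hsq continuousOn_const hx

theorem integral_sq_eq_zero_of_gkEnergy_nonpos {l ρ c τq k t : ℝ} {T q : ℝ → ℝ → ℝ}
    (hl : 0 ≤ l) (hρ : 0 < ρ) (hc : 0 < c) (hτq : 0 < τq) (hk : 0 < k)
    (hE : gkEnergy l ρ c τq k T q t ≤ 0) :
    ∫ x in (0:ℝ)..l, T x t ^ 2 = 0 ∧ ∫ x in (0:ℝ)..l, q x t ^ 2 = 0 := by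
  have hT : 0 ≤ ∫ x in (0:ℝ)..l, T x t ^ 2 :=
    intervalIntegral.integral_nonneg hl fun x _ => sq_nonneg _
  have hq : 0 ≤ ∫ x in (0:ℝ)..l, q x t ^ 2 :=
    intervalIntegral.integral_nonneg hl fun x _ => sq_nonneg _
  have hA : 0 < ρ * c / 2 := by positivity
  have hB : 0 < τq / (2 * k) := by positivity
  unfold gkEnergy at hE
  constructor <;> nlinarith [mul_nonneg hA.le hT, mul_nonneg hB.le hq]

theorem gkEnergy_eq_zero {l ρ c τq k t : ℝ} {T q : ℝ → ℝ → ℝ} (hl : 0 ≤ l)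
    (hT : ∀ x ∈ Icc (0:ℝ) l, T x t = 0) (hq : ∀ x ∈ Icc (0:ℝ) l, q x t = 0) :
    gkEnergy l ρ c τq k T q t = 0 := by
  have hsq (F : ℝ → ℝ → ℝ) (hF : ∀ x ∈ Icc (0:ℝ) l, F x t = 0) :
      ∫ x in (0:ℝ)..l, F x t ^ 2 = 0 := by
    rw [intervalIntegral.integral_congr (g := fun _ => 0) fun x hx => ?_,
      intervalIntegral.integral_zero]
    rw [uIcc_of_le hl] at hx
    simp [hF x hx]
  simp only [gkEnergy, hsq T hT, hsq q hq, mul_zero, add_zero]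

namespace IsGKSolution

variable {l ρ c τq μ2 k : ℝ}

theorem sub {T₁ q₁ Tt₁ Tx₁ qt₁ qx₁ qxx₁ T₂ q₂ Tt₂ Tx₂ qt₂ qx₂ qxx₂ : ℝ → ℝ → ℝ}
    (h₁ : IsGKSolution l ρ c τq μ2 k T₁ q₁ Tt₁ Tx₁ qt₁ qx₁ qxx₁)
    (h₂ : IsGKSolution l ρ c τq μ2 k T₂ q₂ Tt₂ Tx₂ qt₂ qx₂ qxx₂) :
    IsGKSolution l ρ c τq μ2 k (T₁ - T₂) (q₁ - q₂) (Tt₁ - Tt₂) (Tx₁ - Tx₂) (qt₁ - qt₂)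
      (qx₁ - qx₂) (qxx₁ - qxx₂) where
  contT := h₁.contT.sub h₂.contT
  contq := h₁.contq.sub h₂.contq
  hTt x hx t ht := (h₁.hTt x hx t ht).sub (h₂.hTt x hx t ht)
  hTx x hx t ht := (h₁.hTx x hx t ht).sub (h₂.hTx x hx t ht)
  hqt x hx t ht := (h₁.hqt x hx t ht).sub (h₂.hqt x hx t ht)
  hqx x hx t ht := (h₁.hqx x hx t ht).sub (h₂.hqx x hx t ht)
  hqxx x hx t ht := (h₁.hqxx x hx t ht).sub (h₂.hqxx x hx t ht)
  contTt := h₁.contTt.sub h₂.contTt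
  contTx := h₁.contTx.sub h₂.contTx
  contqt := h₁.contqt.sub h₂.contqt
  contqx := h₁.contqx.sub h₂.contqx
  contqxx := h₁.contqxx.sub h₂.contqxx
  pde1 x hx t ht := by
    simp only [Pi.sub_apply]
    linear_combination h₁.pde1 x hx t ht - h₂.pde1 x hx t ht
  pde2 x hx t ht := by
    simp only [Pi.sub_apply]
    linear_combination h₁.pde2 x hx t ht - h₂.pde2 x hx t ht
  bc0 t ht := by simp only [Pi.sub_apply, h₁.bc0 t ht, h₂.bc0 t ht, sub_zero]
  bcl t ht := by simp only [Pi.sub_apply, h₁.bcl t ht, h₂.bcl t ht, sub_zero]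

variable {T q Tt Tx qt qx qxx : ℝ → ℝ → ℝ}
  (h : IsGKSolution l ρ c τq μ2 k T q Tt Tx qt qx qxx)
include h

theorem continuousOn_gkEnergy (hl : 0 ≤ l) : ContinuousOn (gkEnergy l ρ c τq k T q) (Ici 0) :=
  (continuousOn_const.mul (continuousOn_intervalIntegral_of_continuousOn_prod hl
    (h.contT.pow 2))).add
  (continuousOn_const.mul (continuousOn_intervalIntegral_of_continuousOn_prod hl
    (h.contq.pow 2)))

theorem hasDerivAt_gkEnergy (hl : 0 ≤ l) {t : ℝ} (ht : 0 < t) :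
    HasDerivAt (gkEnergy l ρ c τq k T q)
      (ρ * c * (∫ x in (0:ℝ)..l, T x t * Tt x t) + τq / k * ∫ x in (0:ℝ)..l, q x t * qt x t)
      t := by
  have hT := hasDerivAt_intervalIntegral_of_continuousOn_prod (F := fun x s => T x s ^ 2) hl
    (h.contT.pow 2) (continuousOn_const.mul (h.contT.mul h.contTt)) (fun x hx s hs => by
      simpa [mul_assoc] using
        ((h.hTt x hx s (mem_Ioi.mp hs).le).hasDerivAt (Ici_mem_nhds hs)).fun_pow 2) ht
  have hq := hasDerivAt_intervalIntegral_of_continuousOn_prod (F := fun x s => q x s ^ 2) hl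
    (h.contq.pow 2) (continuousOn_const.mul (h.contq.mul h.contqt)) (fun x hx s hs => by
      simpa [mul_assoc] using
        ((h.hqt x hx s (mem_Ioi.mp hs).le).hasDerivAt (Ici_mem_nhds hs)).fun_pow 2) ht
  have hE := (hT.const_mul (ρ * c / 2)).add (hq.const_mul (τq / (2 * k)))
  rw [intervalIntegral.integral_const_mul, intervalIntegral.integral_const_mul] at hE
  exact hE.congr_deriv (by ring)

theorem gkEnergy_rate_eq (hl : 0 ≤ l) (hk : k ≠ 0) {t : ℝ} (ht : 0 < t) :
    ρ * c * (∫ x in (0:ℝ)..l, T x t * Tt x t) + τq / k * ∫ x in (0:ℝ)..l, q x t * qt x t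
      = -∫ x in (0:ℝ)..l, (q x t ^ 2 + μ2 * qx x t ^ 2) / k := by
  have ht' : t ∈ Ici (0:ℝ) := mem_Ici.mpr ht.le
  have slice (F : ℝ → ℝ → ℝ)
      (hF : ContinuousOn (fun p : ℝ × ℝ => F p.1 p.2) (Icc 0 l ×ˢ Ici 0)) :
      ContinuousOn (F · t) (Icc 0 l) :=
    hF.uncurry_right (f := F) t ht'
  have := slice T h.contT
  have := slice q h.contq
  have := slice Tt h.contTt
  have := slice Tx h.contTx
  have := slice qt h.contqt
  have := slice qx h.contqx
  have := slice qxx h.contqxx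
  set flux : ℝ → ℝ := fun x => μ2 / k * (q x t * qx x t) - T x t * q x t
  set flux' : ℝ → ℝ := fun x =>
    μ2 / k * (qx x t * qx x t + q x t * qxx x t) - (Tx x t * q x t + T x t * qx x t)
  set dissipation : ℝ → ℝ := fun x => (q x t ^ 2 + μ2 * qx x t ^ 2) / k
  have hflux (x : ℝ) (hx : x ∈ Icc 0 l) : HasDerivWithinAt flux (flux' x) (Icc 0 l) x :=
    (((h.hqx x hx t ht').mul (h.hqxx x hx t ht')).const_mul (μ2 / k)).sub
      ((h.hTx x hx t ht').mul (h.hqx x hx t ht'))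
  have hflux_int : ∫ x in (0:ℝ)..l, flux' x = 0 := by
    rw [integral_eq_sub_of_hasDeriv_right_of_le hl (fun x hx => (hflux x hx).continuousWithinAt)
      (fun x hx => ((hflux x (Ioo_subset_Icc_self hx)).hasDerivAt
        (Icc_mem_nhds hx.1 hx.2)).hasDerivWithinAt)
      (ContinuousOn.intervalIntegrable_of_Icc hl (by fun_prop))]
    simp only [flux, h.bc0 t ht.le, h.bcl t ht.le]
    ring
  have hpointwise : EqOn (fun x => ρ * c * (T x t * Tt x t) + τq / k * (q x t * qt x t))
      (fun x => flux' x - dissipation x) (Ioo 0 l) := fun x hx => by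
    have h1 := h.pde1 x hx t ht
    have h2 := h.pde2 x hx t ht
    simp only [flux', dissipation]
    field_simp
    linear_combination k * T x t * h1 + q x t * h2
  calc ρ * c * (∫ x in (0:ℝ)..l, T x t * Tt x t) + τq / k * ∫ x in (0:ℝ)..l, q x t * qt x t
      = ∫ x in (0:ℝ)..l, (ρ * c * (T x t * Tt x t) + τq / k * (q x t * qt x t)) := by
        rw [intervalIntegral.integral_add, intervalIntegral.integral_const_mul,
          intervalIntegral.integral_const_mul]
        all_goals exact ContinuousOn.intervalIntegrable_of_Icc hl (by fun_prop)
    _ = ∫ x in (0:ℝ)..l, (flux' x - dissipation x) := integral_congr_Ioo_of_le hl hpointwise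
    _ = -∫ x in (0:ℝ)..l, dissipation x := by
        rw [intervalIntegral.integral_sub, hflux_int, zero_sub]
        all_goals exact ContinuousOn.intervalIntegrable_of_Icc hl (by fun_prop)

theorem antitoneOn_gkEnergy (hl : 0 ≤ l) (hμ2 : 0 ≤ μ2) (hk : 0 < k) :
    AntitoneOn (gkEnergy l ρ c τq k T q) (Ici 0) := by
  refine antitoneOn_of_hasDerivWithinAt_nonpos (convex_Ici 0) (h.continuousOn_gkEnergy hl)
    (f' := fun t => -∫ x in (0:ℝ)..l, (q x t ^ 2 + μ2 * qx x t ^ 2) / k)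
    (fun t ht => ?_) (fun t ht => ?_) <;> rw [interior_Ici] at ht
  · exact ((h.hasDerivAt_gkEnergy hl ht).congr_deriv
      (h.gkEnergy_rate_eq hl hk.ne' ht)).hasDerivWithinAt
  · exact neg_nonpos.mpr (intervalIntegral.integral_nonneg hl fun x _ => by positivity)

theorem eq_zero_of_initial_eq_zero (hl : 0 < l) (hρ : 0 < ρ) (hc : 0 < c) (hτq : 0 < τq)
    (hμ2 : 0 ≤ μ2) (hk : 0 < k)
    (hT0 : ∀ x ∈ Icc (0:ℝ) l, T x 0 = 0) (hq0 : ∀ x ∈ Icc (0:ℝ) l, q x 0 = 0)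
    {x t : ℝ} (hx : x ∈ Icc 0 l) (ht : 0 ≤ t) : T x t = 0 ∧ q x t = 0 := by
  have hE0 : gkEnergy l ρ c τq k T q 0 = 0 := gkEnergy_eq_zero hl.le hT0 hq0
  have hEt : gkEnergy l ρ c τq k T q t ≤ 0 :=
    hE0 ▸ h.antitoneOn_gkEnergy hl.le hμ2 hk self_mem_Ici ht ht
  obtain ⟨hT, hq⟩ := integral_sq_eq_zero_of_gkEnergy_nonpos hl.le hρ hc hτq hk hEt
  exact ⟨eqOn_zero_of_integral_sq_eq_zero hl (h.contT.uncurry_right (f := T) t ht) hT hx,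
    eqOn_zero_of_integral_sq_eq_zero hl (h.contq.uncurry_right (f := q) t ht) hq hx⟩

end IsGKSolution

/-- uniqueness of classical solutions: two classical solutions of the
Guyer–Krumhansl system with the same initial data coincide on `[0,l] × [0,∞)`. -/
theorem gk_uniqueness
    (l ρ c τq μ2 k : ℝ) (hl : 0 < l) (hρ : 0 < ρ) (hc : 0 < c)
    (hτq : 0 < τq) (hμ2 : 0 < μ2) (hk : 0 < k)
    (T₁ q₁ Tt₁ Tx₁ qt₁ qx₁ qxx₁ T₂ q₂ Tt₂ Tx₂ qt₂ qx₂ qxx₂ : ℝ → ℝ → ℝ)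
    (hgk₁ : IsGKSolution l ρ c τq μ2 k T₁ q₁ Tt₁ Tx₁ qt₁ qx₁ qxx₁)
    (hgk₂ : IsGKSolution l ρ c τq μ2 k T₂ q₂ Tt₂ Tx₂ qt₂ qx₂ qxx₂)
    (hT0 : ∀ x ∈ Icc (0:ℝ) l, T₁ x 0 = T₂ x 0)
    (hq0 : ∀ x ∈ Icc (0:ℝ) l, q₁ x 0 = q₂ x 0) :
    ∀ x ∈ Icc (0:ℝ) l, ∀ t ∈ Ici (0:ℝ), T₁ x t = T₂ x t ∧ q₁ x t = q₂ x t := by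
  intro x hx t ht
  obtain ⟨hT, hq⟩ := (hgk₁.sub hgk₂).eq_zero_of_initial_eq_zero hl hρ hc hτq hμ2.le hk
    (fun x hx => sub_eq_zero.mpr (hT0 x hx)) (fun x hx => sub_eq_zero.mpr (hq0 x hx)) hx ht
  exact ⟨sub_eq_zero.mp hT, sub_eq_zero.mp hq⟩
end

section
/- (Discrete energy decay.) Let J, N ∈ ℕ, Δx, Δt > 0, and let real arrays T_j^n (j = 0,…,J+1, n = 0,…,N+1) and q_j^n (j = 0,…,J+1, n = 0,…,N+1) satisfy the implicit finite-difference Guyer–Krumhansl scheme: ρc (T_j^n − T_j^{n−1})/Δt + (q_{j+1}^n − q_j^n)/Δx = 0 for j = 0,…,J, and τ_q (q_j^n − q_j^{n−1})/Δt + q_j^n − μ² (q_{j+1}^n − 2q_j^n + q_{j−1}^n)/Δx² + k (T_j^n − T_{j−1}^n)/Δx = 0 for j = 1,…,J, for each n = 1,…,N+1, with discrete boundary conditions q_0^n = q_{J+1}^n = 0 for all n = 0,…,N+1. Then the discrete energy E^n := ρc (Δx/2) Σ_{j=0}^{J} (T_j^n)² + (τ_q/k)(Δx/2) Σ_{j=0}^{J}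 (q_j^n)² satisfies, for every n = 1,…,N+1, (E^n − E^{n−1})/Δt ≤ −(1/k) Δx Σ_{j=0}^{J} (q_j^n)² − (μ²/k) Δx Σ_{j=0}^{J} ((q_{j+1}^n − q_j^n)/Δx)². -/
open Finset

/-- discrete energy decay: for the implicit finite-difference
Guyer–Krumhansl scheme with boundary conditions `q 0 n = q (J+1) n = 0`, the
discrete energy `Eⁿ = ρc (Δx/2) Σⱼ (Tⱼⁿ)² + (τ_q/k)(Δx/2) Σⱼ (qⱼⁿ)²` satisfies
`(Eⁿ − Eⁿ⁻¹)/Δt ≤ −(1/k) Δx Σⱼ (qⱼⁿ)² − (μ²/k) Δx Σⱼ ((qⱼ₊₁ⁿ − qⱼⁿ)/Δx)²`. -/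
theorem gk_discrete_energy_decay
    (ρ c τq μ2 k : ℝ) (hρ : 0 < ρ) (hc : 0 < c) (hτq : 0 < τq)
    (hμ2 : 0 < μ2) (hk : 0 < k)
    (J N : ℕ) (Δx Δt : ℝ) (hΔx : 0 < Δx) (hΔt : 0 < Δt)
    (T q : ℕ → ℕ → ℝ)
    (hscheme1 : ∀ n, 1 ≤ n → n ≤ N + 1 → ∀ j ≤ J,
      ρ * c * (T j n - T j (n - 1)) / Δt + (q (j + 1) n - q j n) / Δx = 0)
    (hscheme2 : ∀ n, 1 ≤ n → n ≤ N + 1 → ∀ j, 1 ≤ j → j ≤ J →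
      τq * (q j n - q j (n - 1)) / Δt + q j n
        - μ2 * (q (j + 1) n - 2 * q j n + q (j - 1) n) / Δx ^ 2
        + k * (T j n - T (j - 1) n) / Δx = 0)
    (hbc : ∀ n ≤ N + 1, q 0 n = 0 ∧ q (J + 1) n = 0)
    (E : ℕ → ℝ)
    (hE : ∀ n, E n = ρ * c * (Δx / 2) * ∑ j ∈ range (J + 1), (T j n) ^ 2
      + τq / k * (Δx / 2) * ∑ j ∈ range (J + 1), (q j n) ^ 2) :
    ∀ n, 1 ≤ n → n ≤ N + 1 →
      (E n - E (n - 1)) / Δt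
        ≤ -(1 / k) * Δx * ∑ j ∈ range (J + 1), (q j n) ^ 2
          - μ2 / k * Δx * ∑ j ∈ range (J + 1), ((q (j + 1) n - q j n) / Δx) ^ 2 := by
  intro n hn1 hn2
  obtain ⟨hq0, hqJ⟩ := hbc n hn2
  have hk' : k ≠ 0 := hk.ne'
  have hx' : Δx ≠ 0 := hΔx.ne'
  have ht' : Δt ≠ 0 := hΔt.ne'
  -- Step 1: energy difference bounded by sum of products
  have step1 : E n - E (n - 1) ≤
      ∑ j ∈ range (J + 1),
        (ρ * c * Δx * (T j n * (T j n - T j (n - 1)))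
          + τq / k * Δx * (q j n * (q j n - q j (n - 1)))) := by
    have hdiff : E n - E (n - 1) = ∑ j ∈ range (J + 1),
        (ρ * c * (Δx / 2) * ((T j n) ^ 2 - (T j (n - 1)) ^ 2)
          + τq / k * (Δx / 2) * ((q j n) ^ 2 - (q j (n - 1)) ^ 2)) := by
      rw [hE n, hE (n - 1)]
      simp only [mul_sub, Finset.sum_add_distrib, Finset.sum_sub_distrib, Finset.mul_sum]
      ring
    rw [hdiff]
    apply Finset.sum_le_sum
    intro j _
    have h1 : 0 ≤ ρ * c * Δx * (T j n - T j (n - 1)) ^ 2 := by positivity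
    have h2 : 0 ≤ τq / k * Δx * (q j n - q j (n - 1)) ^ 2 := by positivity
    nlinarith [h1, h2]
  -- per-term identity from the scheme
  have term : ∀ j ∈ range (J + 1),
      (ρ * c * Δx * (T j n * (T j n - T j (n - 1)))
          + τq / k * Δx * (q j n * (q j n - q j (n - 1)))) / Δt
        = (-(1 / k) * Δx * (q j n) ^ 2 - μ2 / k * Δx * ((q (j + 1) n - q j n) / Δx) ^ 2)
          + ((q j n * T (j - 1) n - q (j + 1) n * T j n)
            + μ2 / (k * Δx) * (((q (j + 1) n) ^ 2 - q j n * q (j + 1) n)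
              - ((q j n) ^ 2 - q (j - 1) n * q j n))) := by
    intro j hj
    have hjJ : j ≤ J := by simpa [Nat.lt_succ_iff] using hj
    have e1 := hscheme1 n hn1 hn2 j hjJ
    have g1 : ρ * c * (T j n * (T j n - T j (n - 1))) / Δt
        = -(T j n * (q (j + 1) n - q j n)) / Δx := by
      have h1 : ρ * c * (T j n - T j (n - 1)) / Δt = -((q (j + 1) n - q j n) / Δx) := by
        linarith
      calc ρ * c * (T j n * (T j n - T j (n - 1))) / Δt
          = T j n * (ρ * c * (T j n - T j (n - 1)) / Δt) := by ring
        _ = T j n * (-((q (j + 1) n - q j n) / Δx)) := by rw [h1]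
        _ = -(T j n * (q (j + 1) n - q j n)) / Δx := by ring
    rcases Nat.eq_zero_or_pos j with rfl | hj1
    · simp only [Nat.zero_sub, hq0] at g1 ⊢
      calc (ρ * c * Δx * (T 0 n * (T 0 n - T 0 (n - 1)))
              + τq / k * Δx * (0 * (0 - q 0 (n - 1)))) / Δt
          = Δx * (ρ * c * (T 0 n * (T 0 n - T 0 (n - 1))) / Δt) := by ring
        _ = Δx * (-(T 0 n * (q (0 + 1) n - 0)) / Δx) := by rw [g1]
        _ = _ := by field_simp; ring
    · have e2 := hscheme2 n hn1 hn2 j hj1 hjJ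
      have g2 : τq / k * (q j n * (q j n - q j (n - 1))) / Δt
          = q j n * (-(q j n) + μ2 * (q (j + 1) n - 2 * q j n + q (j - 1) n) / Δx ^ 2
              - k * (T j n - T (j - 1) n) / Δx) / k := by
        have h2 : τq * (q j n - q j (n - 1)) / Δt
            = -(q j n) + μ2 * (q (j + 1) n - 2 * q j n + q (j - 1) n) / Δx ^ 2
              - k * (T j n - T (j - 1) n) / Δx := by linarith
        calc τq / k * (q j n * (q j n - q j (n - 1))) / Δt
            = q j n * (τq * (q j n - q j (n - 1)) / Δt) / k := by ring
          _ = _ := by rw [h2]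
      calc (ρ * c * Δx * (T j n * (T j n - T j (n - 1)))
              + τq / k * Δx * (q j n * (q j n - q j (n - 1)))) / Δt
          = Δx * (ρ * c * (T j n * (T j n - T j (n - 1))) / Δt)
            + Δx * (τq / k * (q j n * (q j n - q j (n - 1))) / Δt) := by ring
        _ = Δx * (-(T j n * (q (j + 1) n - q j n)) / Δx)
            + Δx * (q j n * (-(q j n) + μ2 * (q (j + 1) n - 2 * q j n + q (j - 1) n) / Δx ^ 2
              - k * (T j n - T (j - 1) n) / Δx) / k) := by rw [g1, g2]
        _ = _ := by field_simp; ring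
  -- telescoping sums vanish
  have tele1 : ∑ j ∈ range (J + 1),
      (q j n * T (j - 1) n - q (j + 1) n * T j n) = 0 := by
    have h := Finset.sum_range_sub' (fun j => q j n * T (j - 1) n) (J + 1)
    simp only [Nat.add_sub_cancel] at h
    rw [h]
    simp [hq0, hqJ]
  have tele2 : ∑ j ∈ range (J + 1),
      (((q (j + 1) n) ^ 2 - q j n * q (j + 1) n)
        - ((q j n) ^ 2 - q (j - 1) n * q j n)) = 0 := by
    have h := Finset.sum_range_sub (fun j => (q j n) ^ 2 - q (j - 1) n * q j n) (J + 1)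
    simp only [Nat.add_sub_cancel] at h
    rw [h]
    simp [hq0, hqJ]
  calc (E n - E (n - 1)) / Δt
      ≤ (∑ j ∈ range (J + 1),
          (ρ * c * Δx * (T j n * (T j n - T j (n - 1)))
            + τq / k * Δx * (q j n * (q j n - q j (n - 1))))) / Δt := by gcongr
    _ = ∑ j ∈ range (J + 1),
          ((-(1 / k) * Δx * (q j n) ^ 2 - μ2 / k * Δx * ((q (j + 1) n - q j n) / Δx) ^ 2)
            + ((q j n * T (j - 1) n - q (j + 1) n * T j n)
              + μ2 / (k * Δx) * (((q (j + 1) n) ^ 2 - q j n * q (j + 1) n)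
                - ((q j n) ^ 2 - q (j - 1) n * q j n)))) := by
        rw [Finset.sum_div]
        exact Finset.sum_congr rfl term
    _ = -(1 / k) * Δx * ∑ j ∈ range (J + 1), (q j n) ^ 2
          - μ2 / k * Δx * ∑ j ∈ range (J + 1), ((q (j + 1) n - q j n) / Δx) ^ 2 := by
        rw [Finset.sum_add_distrib, Finset.sum_add_distrib, ← Finset.mul_sum, tele1, tele2,
          Finset.sum_sub_distrib, ← Finset.mul_sum, ← Finset.mul_sum]
        ring
end
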